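/- Let K be a finite field, L a field extension of K of finite degree k ≥ 1, and regard L² as a 2k-dimensional K-vector space. Let S = {restrictScalars_K(l) : l a 1-dimensional L-subspace of L²} be the planar spread of the K-space L² obtained by field reduction. Let M ∈ GL(2, L) have irreducible characteristic polynomial over L and multiplicative order |L|² − 1, and set H̄ = ⟨M^{|L|−1}⟩, whose elements act K-linearly on L². Then for every U ∈ S, the stabilizer of U in H̄ (for this K-linear action on K-subspaces) is exactly {I₂, −I₂}. -/

import Mathlib

/-!
Since the characteristic polynomial `χ` of `M` is irreducible, a polynomial `f(M)` in `M` is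
either `0` (when `χ ∣ f`) or invertible (when `χ` and `f` are coprime). Hence a power of `M`
with an eigenvector is a scalar matrix, and the only square roots of `1` among the powers of `M`
are `±1`. An element `A ∈ H̄` stabilising `restrictScalars_K(l)` stabilises the `L`-line `l`,
so it is a scalar `c • 1`; then `c ^ |L| = c` and `A ^ (|L| + 1) = 1` give `A ^ 2 = 1`.
Conversely `-1 ∈ H̄`: in characteristic `2` it equals `1`, and otherwise `H̄` is cyclic of even
order `|L| + 1`, so its element of order `2` is a square root of `1` other than `1`.
-/

open Module

/-- The planar spread of the `K`-vector space `L²` obtained by field reduction: the set of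
`K`-subspaces arising as `restrictScalars K` of the `L`-lines of `L²`. -/
def fieldReductionSpread (K L : Type*) [Field K] [Field L] [Algebra K L] :
    Set (Submodule K (Fin 2 → L)) :=
  {U | ∃ l : Submodule L (Fin 2 → L), finrank L l = 1 ∧ U = l.restrictScalars K}

/-- The `K`-linear action of `A ∈ GL(2, L)` on `K`-subspaces of `L²`: `U · A` is the image
of `U` under the (in particular `K`-linear) map given by the matrix `A`. -/
noncomputable def mapGLK (K : Type*) {L : Type*} [Field K] [Field L] [Algebra K L]
    (A : GL (Fin 2) L) (U : Submodule K (Fin 2 → L)) : Submodule K (Fin 2 → L) :=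
  U.map (LinearMap.restrictScalars K (Matrix.toLin' (A : Matrix (Fin 2) (Fin 2) L)))

open Polynomial Matrix

theorem orderOf_pow_sub_one_of_orderOf_eq_sq_sub_one {G : Type*} [Monoid G] {x : G} {q : ℕ}
    (hq : 2 ≤ q) (hx : orderOf x = q ^ 2 - 1) : orderOf (x ^ (q - 1)) = q + 1 := by
  have hfac : q ^ 2 - 1 = (q + 1) * (q - 1) := by simpa using Nat.sq_sub_sq q 1
  rw [orderOf_pow_of_dvd (by omega) (hx ▸ hfac ▸ dvd_mul_left _ _), hx, hfac,
    Nat.mul_div_cancel _ (by omega)]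

namespace Matrix

variable {n L : Type*} [Fintype n] [DecidableEq n] [Field L] {M : Matrix n n L}

theorem aeval_eq_zero_or_isUnit (hirr : Irreducible M.charpoly) (f : L[X]) :
    aeval M f = 0 ∨ IsUnit (aeval M f) := by
  by_cases hdvd : M.charpoly ∣ f
  · obtain ⟨g, rfl⟩ := hdvd
    simp [aeval_self_charpoly]
  · obtain ⟨a, b, hab⟩ := (hirr.coprime_iff_not_dvd).mpr hdvd
    have hinv : aeval M b * aeval M f = 1 := by
      simpa [aeval_self_charpoly] using congrArg (aeval M) hab
    exact .inr (IsUnit.of_mul_eq_one_right _ hinv)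

theorem aeval_eq_zero_of_mulVec_eq_zero (hirr : Irreducible M.charpoly) (f : L[X])
    {v : n → L} (hv : v ≠ 0) (h : aeval M f *ᵥ v = 0) : aeval M f = 0 :=
  (aeval_eq_zero_or_isUnit hirr f).resolve_right fun hu =>
    hv (mulVec_injective_iff_isUnit.mpr hu (h.trans (mulVec_zero _).symm))

theorem aeval_eq_one_or_eq_neg_one_of_sq_eq_one (hirr : Irreducible M.charpoly) (f : L[X])
    (h : aeval M f ^ 2 = 1) : aeval M f = 1 ∨ aeval M f = -1 := by
  have hfactor : aeval M (f - 1) * aeval M (f + 1) = 0 := by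
    rw [← map_mul, show (f - 1) * (f + 1) = f ^ 2 - 1 by ring, map_sub, map_pow, h, map_one,
      sub_self]
  rcases aeval_eq_zero_or_isUnit hirr (f - 1) with h1 | h1
  · exact .inl (by simpa [sub_eq_zero] using h1)
  · exact .inr (by simpa [add_eq_zero_iff_eq_neg] using h1.mul_right_eq_zero.mp hfactor)

end Matrix

namespace Matrix.GeneralLinearGroup

variable {n L : Type*} [Fintype n] [DecidableEq n] [Field L] {M A : GL n L}

theorem exists_aeval_eq_of_mem_zpowers [Finite L] (hA : A ∈ Subgroup.zpowers M) :
    ∃ f : L[X], aeval (M : Matrix n n L) f = A := by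
  obtain ⟨j, rfl⟩ := mem_powers_iff_mem_zpowers.mpr hA
  exact ⟨X ^ j, by simp⟩

theorem eq_one_or_eq_neg_one_of_sq_eq_one [Finite L]
    (hirr : Irreducible (M : Matrix n n L).charpoly) (hA : A ∈ Subgroup.zpowers M)
    (h : A ^ 2 = 1) : A = 1 ∨ A = -1 := by
  obtain ⟨f, hf⟩ := exists_aeval_eq_of_mem_zpowers hA
  have hsq : aeval (M : Matrix n n L) f ^ 2 = 1 := by rw [hf, ← Units.val_pow_eq_pow_val, h]; rfl
  rcases aeval_eq_one_or_eq_neg_one_of_sq_eq_one hirr f hsq with h1 | h1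
  · exact .inl (Units.ext (hf ▸ h1))
  · exact .inr (Units.ext (hf ▸ h1))

theorem neg_one_mem_zpowers_of_even_orderOf [Finite L]
    (hirr : Irreducible (M : Matrix n n L).charpoly)
    {N : GL n L} (hN : N ∈ Subgroup.zpowers M) (heven : Even (orderOf N)) :
    -1 ∈ Subgroup.zpowers N := by
  set B := N ^ (orderOf N / 2)
  have hsq : B ^ 2 = 1 := by
    rw [← pow_mul, Nat.div_mul_cancel heven.two_dvd, pow_orderOf_eq_one]
  have hpos : 0 < orderOf N := orderOf_pos N
  have hB1 : B ≠ 1 := pow_ne_one_of_lt_orderOf (by grind) (by grind)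
  have hBM : B ∈ Subgroup.zpowers M := Subgroup.pow_mem _ hN _
  rw [← (eq_one_or_eq_neg_one_of_sq_eq_one hirr hBM hsq).resolve_left hB1]
  exact Subgroup.pow_mem _ (Subgroup.mem_zpowers N) _

theorem exists_eq_smul_one_of_map_le [Finite L]
    (hirr : Irreducible (M : Matrix n n L).charpoly) (hA : A ∈ Subgroup.zpowers M)
    {l : Submodule L (n → L)} (hl : finrank L l = 1)
    (hfix : l.map (Matrix.toLin' (A : Matrix n n L)) ≤ l) :
    ∃ c : L, (A : Matrix n n L) = c • 1 := by
  obtain ⟨f, hf⟩ := exists_aeval_eq_of_mem_zpowers hA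
  obtain ⟨v, hv, hgen⟩ := finrank_eq_one_iff'.mp hl
  obtain ⟨c, hc⟩ := hgen ⟨_, hfix (Submodule.mem_map_of_mem v.2)⟩
  have hv' : (v : n → L) ≠ 0 := fun h => hv (Subtype.ext h)
  have hAv : (A : Matrix n n L) *ᵥ v = c • v := by
    rw [← Matrix.toLin'_apply]
    exact (congrArg Subtype.val hc).symm
  have heigen : aeval (M : Matrix n n L) (f - C c) *ᵥ v = 0 := by
    rw [map_sub, hf, aeval_C, Algebra.algebraMap_eq_smul_one, sub_mulVec, smul_mulVec, one_mulVec,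
      hAv, sub_self]
  refine ⟨c, ?_⟩
  rw [← hf, ← sub_eq_zero, ← Algebra.algebraMap_eq_smul_one, ← aeval_C (M : Matrix n n L),
    ← map_sub]
  exact aeval_eq_zero_of_mulVec_eq_zero hirr _ hv' heigen

theorem eq_one_or_eq_neg_one_of_map_le [Fintype L]
    (hirr : Irreducible (M : Matrix n n L).charpoly) (hA : A ∈ Subgroup.zpowers M)
    (hpow : A ^ (Fintype.card L + 1) = 1) {l : Submodule L (n → L)} (hl : finrank L l = 1)
    (hfix : l.map (Matrix.toLin' (A : Matrix n n L)) ≤ l) : A = 1 ∨ A = -1 := by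
  obtain ⟨c, hc⟩ := exists_eq_smul_one_of_map_le hirr hA hl hfix
  have hfrob : A ^ Fintype.card L = A :=
    Units.ext <| by
      rw [Units.val_pow_eq_pow_val, hc, _root_.smul_pow, one_pow, FiniteField.pow_card]
  refine eq_one_or_eq_neg_one_of_sq_eq_one hirr hA ?_
  calc A ^ 2 = A ^ Fintype.card L * A := by rw [hfrob, sq]
    _ = 1 := by rw [← pow_succ, hpow]

theorem neg_one_mem_zpowers_pow_card_sub_one [Fintype L]
    (hirr : Irreducible (M : Matrix n n L).charpoly)
    (hN : orderOf (M ^ (Fintype.card L - 1)) = Fintype.card L + 1) :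
    -1 ∈ Subgroup.zpowers (M ^ (Fintype.card L - 1)) := by
  by_cases hchar : ringChar L = 2
  · have hneg : (-1 : GL n L) = 1 := Units.ext <| by
      rw [Units.val_neg, Units.val_one, ← neg_one_smul L, neg_one_eq_one_iff.mpr hchar, one_smul]
    rw [hneg]
    exact Subgroup.one_mem _
  · refine neg_one_mem_zpowers_of_even_orderOf hirr
      (Subgroup.pow_mem _ (Subgroup.mem_zpowers M) _) ?_
    rw [hN, Nat.even_add_one, Nat.not_even_iff]
    exact FiniteField.odd_card_of_char_ne_two hchar

end Matrix.GeneralLinearGroup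

section mapGLK

variable {K L : Type*} [Field K] [Field L] [Algebra K L]

@[simp]
theorem mapGLK_one (U : Submodule K (Fin 2 → L)) : mapGLK K 1 U = U := by
  simp [mapGLK]

@[simp]
theorem mapGLK_neg (A : GL (Fin 2) L) (U : Submodule K (Fin 2 → L)) :
    mapGLK K (-A) U = mapGLK K A U := by
  simp [mapGLK, Submodule.map_neg]

theorem mapGLK_restrictScalars (A : GL (Fin 2) L) (l : Submodule L (Fin 2 → L)) :
    mapGLK K A (l.restrictScalars K) =
      (l.map (Matrix.toLin' (A : Matrix (Fin 2) (Fin 2) L))).restrictScalars K := by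
  ext x
  simp [mapGLK]

end mapGLK

theorem stabilizer_spread_element_in_singer_subgroup_general
    {K L : Type*} [Field K] [Field L] [Fintype L] [Algebra K L]
    (M : GL (Fin 2) L)
    (hirr : Irreducible (Matrix.charpoly (M : Matrix (Fin 2) (Fin 2) L)))
    (hord : orderOf M = Fintype.card L ^ 2 - 1) :
    ∀ U ∈ fieldReductionSpread K L,
      {A : GL (Fin 2) L |
          A ∈ Subgroup.zpowers (M ^ (Fintype.card L - 1)) ∧ mapGLK K A U = U}
        = {(1 : GL (Fin 2) L), -1} := by
  rintro _ ⟨l, hl, rfl⟩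
  have hN : orderOf (M ^ (Fintype.card L - 1)) = Fintype.card L + 1 :=
    orderOf_pow_sub_one_of_orderOf_eq_sq_sub_one Fintype.one_lt_card hord
  ext A
  simp only [Set.mem_ofPred_eq, Set.mem_insert_iff, Set.mem_singleton_iff]
  constructor
  · rintro ⟨hA, hfix⟩
    rw [mapGLK_restrictScalars] at hfix
    exact GeneralLinearGroup.eq_one_or_eq_neg_one_of_map_le hirr
      (Subgroup.zpowers_le.mpr (Subgroup.pow_mem _ (Subgroup.mem_zpowers M) _) hA)
      (orderOf_dvd_iff_pow_eq_one.mp (hN ▸ orderOf_dvd_of_mem_zpowers hA)) hl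
      (Submodule.restrictScalars_injective K L _ hfix).le
  · rintro (rfl | rfl)
    · exact ⟨Subgroup.one_mem _, mapGLK_one _⟩
    · exact ⟨GeneralLinearGroup.neg_one_mem_zpowers_pow_card_sub_one hirr hN,
        (mapGLK_neg 1 _).trans (mapGLK_one _)⟩

/-- Let `K` be a finite field, `L/K` an extension of degree `k ≥ 1`, `S`
the planar spread of the `K`-space `L²` by field reduction, `M ∈ GL(2, L)` a Singer cycle
and `H̄ = ⟨M^{|L|−1}⟩`. Then for every `U ∈ S`, the stabilizer of `U` in `H̄` (for the
`K`-linear action on `K`-subspaces) is exactly `{I₂, −I₂}`. -/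
theorem stabilizer_spread_element_in_singer_subgroup
    {K L : Type*} [Field K] [Fintype K] [Field L] [Fintype L] [Algebra K L]
    (k : ℕ) (hk : 1 ≤ k) (hdeg : finrank K L = k)
    (M : GL (Fin 2) L)
    (hirr : Irreducible (Matrix.charpoly (M : Matrix (Fin 2) (Fin 2) L)))
    (hord : orderOf M = Fintype.card L ^ 2 - 1) :
    ∀ U ∈ fieldReductionSpread K L,
      {A : GL (Fin 2) L |
          A ∈ Subgroup.zpowers (M ^ (Fintype.card L - 1)) ∧ mapGLK K A U = U}
        = {(1 : GL (Fin 2) L), -1} :=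
  stabilizer_spread_element_in_singer_subgroup_general M hirr hord
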